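/- There exists a constant C⊥ > 0, depending only on α and β, such that for every bounded interval D ⊂ ℝ and every u ∈ H¹(D): inf over v ∈ V(D) of ( ∫_D |u − v|² + ∫_D |u' − v'|² ) ≤ C⊥² ∫_{D ∩ F₁} |u'|². Equivalently, the H¹(D)-norm of the orthogonal projection of u onto the orthogonal complement of V(D) in H¹(D) is at most C⊥ ‖u'‖_{L²(D ∩ F₁)}, uniformly over all bounded intervals D. -/

import Mathlib

/-!
Put `g := u' · 1_{D ∩ F₁}` and cut `ℝ` into the unit cells `[n + α, n + α + 1)`. Each cell begins
with the soft interval `(n + α, n + β)`, on which the corrector `w` spreads `∫_cell g` uniformly,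
and ends with stiff material, where `w = 0`. Then `f := g - w` equals `u'` on `D ∩ F₁` and has zero
integral over every cell, so its primitive `Φ` vanishes at all cell endpoints and, by Cauchy–Schwarz
on one cell, `‖Φ‖² ≤ ∫_cell ‖f‖²` there. The competitor `v := u - Φ`, `v' := u' - f` lies in `V(D)`,
and summing the cell bounds gives
`‖Φ‖²_{L²(D)} + ‖f‖²_{L²(D)} ≤ 4 (1 + (β - α)⁻²) ∫_{D ∩ F₁} ‖u'‖²`.
-/

open MeasureTheory Real Set
open scoped ComplexConjugate

noncomputable section

/-- `u ∈ H¹(a,b)` with (weak) derivative `u'`. -/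
def IsH1On (a b : ℝ) (u u' : ℝ → ℂ) : Prop :=
  MemLp u' 2 (volume.restrict (Ioo a b)) ∧
  ∀ x ∈ Icc a b, u x = u a + ∫ t in a..x, u' t

/-- The periodic "stiff" component `F₁ = ∪ₙ ((n, n+α) ∪ (n+β, n+1))`. -/
def F1 (α β : ℝ) : Set ℝ :=
  ⋃ n : ℤ, (Ioo (n : ℝ) ((n : ℝ) + α) ∪ Ioo ((n : ℝ) + β) ((n : ℝ) + 1))

variable {E : Type*} [NormedAddCommGroup E] [NormedSpace ℝ E]

theorem sq_norm_setIntegral_le {X : Type*} [MeasurableSpace X] {μ : Measure X} {s : Set X}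
    (hs : μ s ≠ ⊤) {h : X → E} (hh : MemLp h 2 (μ.restrict s)) :
    ‖∫ x in s, h x ∂μ‖ ^ 2 ≤ μ.real s * ∫ x in s, ‖h x‖ ^ 2 ∂μ := by
  by_cases hμs : μ s = 0
  · simp [setIntegral_measure_zero _ hμs, measureReal_def, hμs]
  have hV : 0 < μ.real s := ENNReal.toReal_pos hμs hs
  have := isFiniteMeasure_restrict.mpr hs
  set m := ∫ x in s, ‖h x‖ ∂μ
  set V := μ.real s
  set I := ∫ x in s, ‖h x‖ ^ 2 ∂μ
  have hm : ‖∫ x in s, h x ∂μ‖ ≤ m := norm_integral_le_integral_norm _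
  have hh1 : Integrable (fun x => ‖h x‖) (μ.restrict s) := (hh.integrable one_le_two).norm
  have hh2 : Integrable (fun x => ‖h x‖ ^ 2) (μ.restrict s) := hh.integrable_norm_pow two_ne_zero
  -- integrate `2 m V ‖h‖ ≤ V² ‖h‖² + m²`
  have key : 2 * m * V * m ≤ V ^ 2 * I + m ^ 2 * V := by
    calc 2 * m * V * m = ∫ x in s, 2 * m * V * ‖h x‖ ∂μ := by rw [integral_const_mul]
      _ ≤ ∫ x in s, (V ^ 2 * ‖h x‖ ^ 2 + m ^ 2) ∂μ :=
          integral_mono (hh1.const_mul _) ((hh2.const_mul _).add (integrable_const _))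
            fun x => by nlinarith [sq_nonneg (V * ‖h x‖ - m)]
      _ = V ^ 2 * I + m ^ 2 * V := by
          rw [integral_add (hh2.const_mul _) (integrable_const _), integral_const_mul,
            integral_const, measureReal_restrict_apply_univ, smul_eq_mul, mul_comm V]
  have : m ^ 2 ≤ V * I := by nlinarith
  nlinarith [norm_nonneg (∫ x in s, h x ∂μ)]

def cell (c : ℝ) (n : ℤ) : Set ℝ := Ico (n + c) (n + c + 1)

namespace cell

variable {c : ℝ}

theorem floor_sub_eq_iff {x : ℝ} {n : ℤ} : ⌊x - c⌋ = n ↔ x ∈ cell c n := by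
  rw [Int.floor_eq_iff, cell, mem_Ico]
  constructor <;> rintro ⟨h₁, h₂⟩ <;> constructor <;> linarith

theorem mem_floor (c x : ℝ) : x ∈ cell c ⌊x - c⌋ := floor_sub_eq_iff.mp rfl

theorem measurableSet (c : ℝ) (n : ℤ) : MeasurableSet (cell c n) := measurableSet_Ico

theorem volume_eq (c : ℝ) (n : ℤ) : volume (cell c n) = 1 := by
  simp [cell, Real.volume_Ico]

theorem volume_ne_top (c : ℝ) (n : ℤ) : volume (cell c n) ≠ ⊤ := by
  simp [volume_eq]

theorem volume_real_eq (c : ℝ) (n : ℤ) : volume.real (cell c n) = 1 := by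
  simp [measureReal_def, volume_eq]

theorem pairwise_disjoint (c : ℝ) : Pairwise (Function.onFun Disjoint (cell c)) := by
  intro m n hmn
  refine disjoint_left.mpr fun x hm hn => hmn ?_
  rw [← floor_sub_eq_iff.mpr hm, ← floor_sub_eq_iff.mpr hn]

theorem setIntegral_le_of_le {n : ℤ} {h : ℝ → ℝ} {q : ℝ} (hh : IntegrableOn h (cell c n))
    (hq : ∀ x ∈ cell c n, h x ≤ q) : ∫ x in cell c n, h x ≤ q := by
  calc ∫ x in cell c n, h x ≤ ∫ _ in cell c n, q :=
        setIntegral_mono_on hh (integrableOn_const (volume_ne_top c n)) (measurableSet c n) hq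
    _ = q := by rw [setIntegral_const, volume_real_eq, one_smul]

theorem sum_setIntegral_le_integral {h : ℝ → ℝ} (h0 : 0 ≤ h) (hh : Integrable h) (s : Finset ℤ) :
    ∑ n ∈ s, ∫ x in cell c n, h x ≤ ∫ x, h x := by
  rw [← integral_biUnion_finset s (fun n _ => measurableSet c n)
    ((pairwise_disjoint c).set_pairwise _) fun n _ => hh.integrableOn]
  exact setIntegral_le_integral hh (.of_forall h0)

theorem setIntegral_Ioo_le_sum {h : ℝ → ℝ} (h0 : 0 ≤ h) (hh : ∀ n, IntegrableOn h (cell c n))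
    (a b : ℝ) :
    ∫ x in Ioo a b, h x ≤ ∑ n ∈ Finset.Icc ⌊a - c⌋ ⌊b - c⌋, ∫ x in cell c n, h x := by
  have hsub : Ioo a b ⊆ ⋃ n ∈ Finset.Icc ⌊a - c⌋ ⌊b - c⌋, cell c n := fun x hx =>
    mem_biUnion (Finset.mem_Icc.mpr ⟨Int.floor_le_floor (by linarith [hx.1]),
      Int.floor_le_floor (by linarith [hx.2])⟩) (mem_floor c x)
  rw [← integral_biUnion_finset _ (fun n _ => measurableSet c n)
    ((pairwise_disjoint c).set_pairwise _) fun n _ => hh n]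
  exact setIntegral_mono_set (integrableOn_finset_iUnion.mpr fun n _ => hh n)
    (.of_forall fun x => h0 x) (.of_forall hsub)

theorem sq_norm_intervalIntegral_le {n : ℤ} {x : ℝ} (hx : x ∈ cell c n) {f : ℝ → E}
    (hf : MemLp f 2 (volume.restrict (cell c n))) :
    ‖∫ t in (n + c)..x, f t‖ ^ 2 ≤ ∫ t in cell c n, ‖f t‖ ^ 2 := by
  have hsub : Ioc (n + c) x ⊆ cell c n := fun y hy => ⟨hy.1.le, hy.2.trans_lt hx.2⟩
  have hvol : volume.real (Ioc ((n : ℝ) + c) x) ≤ 1 := by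
    rw [Real.volume_real_Ioc]; exact max_le (by linarith [hx.2]) zero_le_one
  rw [intervalIntegral.integral_of_le hx.1]
  calc ‖∫ t in Ioc (n + c) x, f t‖ ^ 2
      ≤ volume.real (Ioc ((n : ℝ) + c) x) * ∫ t in Ioc (n + c) x, ‖f t‖ ^ 2 :=
        sq_norm_setIntegral_le measure_Ioc_lt_top.ne
          (hf.mono_measure (Measure.restrict_mono hsub le_rfl))
    _ ≤ ∫ t in Ioc (n + c) x, ‖f t‖ ^ 2 := mul_le_of_le_one_left (by positivity) hvol
    _ ≤ ∫ t in cell c n, ‖f t‖ ^ 2 :=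
        setIntegral_mono_set (hf.integrable_norm_pow two_ne_zero)
          (.of_forall fun t => by positivity) (.of_forall hsub)

end cell

theorem intervalIntegral_add_intCast_eq_zero {c : ℝ} {f : ℝ → E}
    (hf : ∀ x y, IntervalIntegrable f volume x y)
    (hcell : ∀ n : ℤ, ∫ x in (n + c)..(n + c + 1), f x = 0) (n : ℤ) :
    ∫ x in c..(n + c), f x = 0 := by
  have step : ∀ n : ℤ, ∫ x in c..((n + 1 : ℤ) + c), f x = ∫ x in c..(n + c), f x := fun n => by
    rw [← intervalIntegral.integral_add_adjacent_intervals (hf c (n + c)) (hf _ _), Int.cast_add,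
      Int.cast_one, add_right_comm, hcell n, add_zero]
  induction n using Int.induction_on with
  | zero => simp
  | succ i ih => rw [step, ih]
  | pred i ih => rwa [← step, sub_add_cancel]

def cellIntegral (c : ℝ) (g : ℝ → E) (n : ℤ) : E := ∫ x in cell c n, g x

def corrector (c ℓ : ℝ) (g : ℝ → E) (x : ℝ) : E :=
  if Int.fract (x - c) < ℓ then ℓ⁻¹ • cellIntegral c g ⌊x - c⌋ else 0

section corrector

variable {c ℓ : ℝ} {g : ℝ → E}

theorem corrector_eq_indicator {n : ℤ} {x : ℝ} (hx : x ∈ cell c n) :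
    corrector c ℓ g x =
      (Ico (n + c) (n + c + ℓ)).indicator (fun _ => ℓ⁻¹ • cellIntegral c g n) x := by
  have hn := cell.floor_sub_eq_iff.mpr hx
  rw [corrector, ← Int.self_sub_floor, hn, indicator_apply]
  exact if_congr ⟨fun h => ⟨hx.1, by linarith⟩, fun h => by linarith [h.2]⟩ rfl rfl

theorem stronglyMeasurable_corrector : StronglyMeasurable (corrector c ℓ g) :=
  .ite (measurableSet_lt (measurable_fract.comp (measurable_id.sub_const c)) measurable_const)
    ((StronglyMeasurable.of_discrete (f := fun n : ℤ => ℓ⁻¹ • cellIntegral c g n)).comp_measurable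
      (Int.measurable_floor.comp (measurable_id.sub_const c)))
    stronglyMeasurable_const

theorem norm_corrector_le (hℓ : 0 ≤ ℓ) (x : ℝ) :
    ‖corrector c ℓ g x‖ ≤ ℓ⁻¹ * ‖cellIntegral c g ⌊x - c⌋‖ := by
  unfold corrector
  split_ifs
  · rw [norm_smul, Real.norm_of_nonneg (inv_nonneg.mpr hℓ)]
  · rw [norm_zero]; positivity

theorem norm_cellIntegral_le (hg : Integrable g) (n : ℤ) :
    ‖cellIntegral c g n‖ ≤ ∫ x, ‖g x‖ :=
  (norm_integral_le_integral_norm _).trans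
    (setIntegral_le_integral hg.norm (.of_forall fun _ => norm_nonneg _))

theorem sq_norm_cellIntegral_le (hg : MemLp g 2 volume) (n : ℤ) :
    ‖cellIntegral c g n‖ ^ 2 ≤ ∫ x in cell c n, ‖g x‖ ^ 2 := by
  simpa [cellIntegral, cell.volume_real_eq] using
    sq_norm_setIntegral_le (cell.volume_ne_top c n) (hg.restrict (cell c n))

theorem memLp_top_corrector (hℓ : 0 ≤ ℓ) (hg : Integrable g) : MemLp (corrector c ℓ g) ⊤ volume :=
  memLp_top_of_bound stronglyMeasurable_corrector.aestronglyMeasurable (ℓ⁻¹ * ∫ x, ‖g x‖) <|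
    .of_forall fun x => (norm_corrector_le hℓ x).trans <| by
      gcongr; exact norm_cellIntegral_le hg _

theorem setIntegral_cell_corrector [CompleteSpace E] (hℓ : 0 < ℓ) (hℓ1 : ℓ ≤ 1) (n : ℤ) :
    ∫ x in cell c n, corrector c ℓ g x = cellIntegral c g n := by
  rw [setIntegral_congr_fun (cell.measurableSet c n) fun x hx => corrector_eq_indicator hx,
    setIntegral_indicator measurableSet_Ico,
    inter_eq_right.mpr (show Ico _ _ ⊆ cell c n from Ico_subset_Ico_right (by linarith)),
    setIntegral_const, Real.volume_real_Ico, max_eq_left (by linarith), add_sub_cancel_left,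
    smul_smul, mul_inv_cancel₀ hℓ.ne', one_smul]

end corrector

section estimate

variable {c ℓ : ℝ} {g : ℝ → E}

theorem intervalIntegrable_sub_corrector (hℓ : 0 ≤ ℓ) (hg : Integrable g) (x y : ℝ) :
    IntervalIntegrable (g - corrector c ℓ g) volume x y :=
  hg.intervalIntegrable.sub <| ((memLp_top_corrector hℓ hg).locallyIntegrable le_top
    |>.integrableOn_isCompact isCompact_uIcc).intervalIntegrable

theorem memLp_sub_corrector (hℓ : 0 ≤ ℓ) (hg : Integrable g) (hg2 : MemLp g 2 volume)
    {s : Set ℝ} (hs : volume s ≠ ⊤) : MemLp (g - corrector c ℓ g) 2 (volume.restrict s) :=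
  have := isFiniteMeasure_restrict.mpr hs
  (hg2.restrict s).sub (((memLp_top_corrector hℓ hg).restrict s).mono_exponent le_top)

theorem setIntegral_cell_sq_norm_sub_corrector_le (hℓ : 0 < ℓ) (hg : Integrable g)
    (hg2 : MemLp g 2 volume) (n : ℤ) :
    ∫ x in cell c n, ‖(g - corrector c ℓ g) x‖ ^ 2 ≤
      2 * (1 + ℓ⁻¹ ^ 2) * ∫ x in cell c n, ‖g x‖ ^ 2 := by
  set P := ∫ x in cell c n, ‖g x‖ ^ 2
  have hw : ∀ x ∈ cell c n, ‖corrector c ℓ g x‖ ^ 2 ≤ ℓ⁻¹ ^ 2 * P := fun x hx => by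
    have h := norm_corrector_le (c := c) (g := g) hℓ.le x
    rw [cell.floor_sub_eq_iff.mpr hx] at h
    calc ‖corrector c ℓ g x‖ ^ 2 ≤ (ℓ⁻¹ * ‖cellIntegral c g n‖) ^ 2 := by gcongr
      _ ≤ ℓ⁻¹ ^ 2 * P := by rw [mul_pow]; gcongr; exact sq_norm_cellIntegral_le hg2 n
  have hg2' : IntegrableOn (fun x => ‖g x‖ ^ 2) (cell c n) :=
    (hg2.integrable_norm_pow two_ne_zero).integrableOn
  calc ∫ x in cell c n, ‖(g - corrector c ℓ g) x‖ ^ 2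
      ≤ ∫ x in cell c n, (2 * ‖g x‖ ^ 2 + 2 * (ℓ⁻¹ ^ 2 * P)) := by
        refine setIntegral_mono_on ?_
          ((hg2'.const_mul 2).add (integrableOn_const (cell.volume_ne_top c n)))
          (cell.measurableSet c n) fun x hx => ?_
        · exact (memLp_sub_corrector hℓ.le hg hg2 (cell.volume_ne_top c _)).integrable_norm_pow
            two_ne_zero
        · rw [Pi.sub_apply]
          have := norm_sub_le (g x) (corrector c ℓ g x)
          nlinarith [hw x hx, sq_nonneg (‖g x‖ - ‖corrector c ℓ g x‖),
            norm_nonneg (g x - corrector c ℓ g x), norm_nonneg (corrector c ℓ g x)]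
    _ = 2 * (1 + ℓ⁻¹ ^ 2) * P := by
        rw [integral_add (hg2'.const_mul 2) (integrableOn_const (cell.volume_ne_top c _)),
          integral_const_mul, setIntegral_const, cell.volume_real_eq, one_smul]
        ring

variable [CompleteSpace E]

theorem intervalIntegral_cell_sub_corrector (hℓ : 0 < ℓ) (hℓ1 : ℓ ≤ 1) (hg : Integrable g)
    (n : ℤ) : ∫ x in (n + c)..(n + c + 1), (g - corrector c ℓ g) x = 0 := by
  rw [intervalIntegral.integral_of_le (by linarith), integral_Ioc_eq_integral_Ioo,
    ← integral_Ico_eq_integral_Ioo, ← cell]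
  have := isFiniteMeasure_restrict.mpr (cell.volume_ne_top c n)
  simp only [Pi.sub_apply]
  rw [integral_sub hg.integrableOn
    (((memLp_top_corrector hℓ.le hg).restrict _).integrable le_top),
    setIntegral_cell_corrector hℓ hℓ1, cellIntegral, sub_self]

theorem sq_norm_primitive_sub_corrector_le (hℓ : 0 < ℓ) (hℓ1 : ℓ ≤ 1) (hg : Integrable g)
    (hg2 : MemLp g 2 volume) (x : ℝ) :
    ‖∫ t in c..x, (g - corrector c ℓ g) t‖ ^ 2 ≤
      ∫ t in cell c ⌊x - c⌋, ‖(g - corrector c ℓ g) t‖ ^ 2 := by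
  have hf := intervalIntegrable_sub_corrector (c := c) hℓ.le hg
  rw [← intervalIntegral.integral_add_adjacent_intervals (hf c (⌊x - c⌋ + c)) (hf _ x),
    intervalIntegral_add_intCast_eq_zero hf (intervalIntegral_cell_sub_corrector hℓ hℓ1 hg),
    zero_add]
  exact cell.sq_norm_intervalIntegral_le (cell.mem_floor c x)
    (memLp_sub_corrector hℓ.le hg hg2 (cell.volume_ne_top c _))

theorem primitive_sub_corrector_estimate (hℓ : 0 < ℓ) (hℓ1 : ℓ ≤ 1) (hg : Integrable g)
    (hg2 : MemLp g 2 volume) (a b : ℝ) :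
    (∫ x in Ioo a b, ‖∫ t in c..x, (g - corrector c ℓ g) t‖ ^ 2) +
        ∫ x in Ioo a b, ‖(g - corrector c ℓ g) x‖ ^ 2 ≤
      4 * (1 + ℓ⁻¹ ^ 2) * ∫ x, ‖g x‖ ^ 2 := by
  set f := g - corrector c ℓ g
  set S := Finset.Icc ⌊a - c⌋ ⌊b - c⌋
  set Q : ℤ → ℝ := fun n => ∫ x in cell c n, ‖f x‖ ^ 2
  have hf2 : ∀ n, IntegrableOn (fun x => ‖f x‖ ^ 2) (cell c n) := fun n =>
    (memLp_sub_corrector hℓ.le hg hg2 (cell.volume_ne_top c _)).integrable_norm_pow two_ne_zero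
  have hΦ : Continuous fun x => ‖∫ t in c..x, f t‖ ^ 2 :=
    (intervalIntegral.continuous_primitive (intervalIntegrable_sub_corrector hℓ.le hg) c).norm.pow 2
  have hΦQ : ∀ n, ∫ x in cell c n, ‖∫ t in c..x, f t‖ ^ 2 ≤ Q n := fun n =>
    cell.setIntegral_le_of_le (hΦ.integrableOn_Icc.mono_set Ico_subset_Icc_self) fun x hx => by
      simpa only [Q, cell.floor_sub_eq_iff.mpr hx] using
        sq_norm_primitive_sub_corrector_le (c := c) hℓ hℓ1 hg hg2 x
  have hQ : ∑ n ∈ S, Q n ≤ 2 * (1 + ℓ⁻¹ ^ 2) * ∫ x, ‖g x‖ ^ 2 := by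
    refine (Finset.sum_le_sum fun n _ =>
      setIntegral_cell_sq_norm_sub_corrector_le hℓ hg hg2 n).trans ?_
    rw [← Finset.mul_sum]
    gcongr
    exact cell.sum_setIntegral_le_integral (fun x => by positivity)
      (hg2.integrable_norm_pow two_ne_zero) S
  have hΦD := (cell.setIntegral_Ioo_le_sum (fun x => by positivity)
    (fun n => hΦ.integrableOn_Icc.mono_set Ico_subset_Icc_self) a b).trans
      (Finset.sum_le_sum fun n _ => hΦQ n)
  have hfD := cell.setIntegral_Ioo_le_sum (c := c) (fun x => by positivity) hf2 a b
  linarith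

end estimate

section IsH1On

variable {a b : ℝ} {u u' v v' : ℝ → ℂ}

theorem IsH1On.intervalIntegrable (hu : IsH1On a b u u') {x : ℝ} (hx : x ∈ Icc a b) :
    IntervalIntegrable u' volume a x := by
  refine IntegrableOn.intervalIntegrable ?_
  rw [uIcc_of_le hx.1]
  exact ((integrableOn_Icc_iff_integrableOn_Ioo (f := u')).mpr
    (hu.1.integrable one_le_two)).mono_set (Icc_subset_Icc_right hx.2)

theorem IsH1On.sub (hu : IsH1On a b u u') (hv : IsH1On a b v v') :
    IsH1On a b (u - v) (u' - v') := by
  refine ⟨hu.1.sub hv.1, fun x hx => ?_⟩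
  simp only [Pi.sub_apply]
  rw [intervalIntegral.integral_sub (hu.intervalIntegrable hx) (hv.intervalIntegrable hx),
    hu.2 x hx, hv.2 x hx]
  ring

theorem isH1On_primitive {f : ℝ → ℂ} (hf : ∀ x y, IntervalIntegrable f volume x y)
    (hf2 : MemLp f 2 (volume.restrict (Ioo a b))) (c : ℝ) :
    IsH1On a b (fun x => ∫ t in c..x, f t) f :=
  ⟨hf2, fun x _ => (intervalIntegral.integral_add_adjacent_intervals (hf c a) (hf a x)).symm⟩

end IsH1On

theorem corrector_eq_zero_of_mem_F1 {α β : ℝ} (hα : 0 < α) (hαβ : α < β) (hβ : β < 1)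
    {g : ℝ → ℂ} {x : ℝ} (hx : x ∈ F1 α β) : corrector α (β - α) g x = 0 := by
  obtain ⟨n, ⟨h₁, h₂⟩ | ⟨h₁, h₂⟩⟩ := mem_iUnion.mp hx
  · have hcell : x ∈ cell α (n - 1) := by constructor <;> push_cast <;> linarith
    rw [corrector_eq_indicator hcell, indicator_of_notMem]
    exact fun h => by push_cast at h; linarith [h.2]
  · have hcell : x ∈ cell α n := by constructor <;> linarith
    rw [corrector_eq_indicator hcell, indicator_of_notMem]
    exact fun h => by linarith [h.2]

theorem measurableSet_F1 (α β : ℝ) : MeasurableSet (F1 α β) :=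
  (isOpen_iUnion fun _ => isOpen_Ioo.union isOpen_Ioo).measurableSet

theorem stmt_14 (α β : ℝ) (hα : 0 < α) (hαβ : α < β) (hβ : β < 1) :
    ∃ C > (0:ℝ), ∀ a b : ℝ, a < b → ∀ u u' : ℝ → ℂ, IsH1On a b u u' →
      sInf {r : ℝ | ∃ v v' : ℝ → ℂ, IsH1On a b v v' ∧
          (∀ᵐ x ∂volume, x ∈ Ioo a b ∩ F1 α β → v' x = 0) ∧
          r = (∫ x in Ioo a b, ‖u x - v x‖ ^ 2) +
              ∫ x in Ioo a b, ‖u' x - v' x‖ ^ 2} ≤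
        C ^ 2 * ∫ x in Ioo a b ∩ F1 α β, ‖u' x‖ ^ 2 := by
  have hℓ : 0 < β - α := sub_pos.mpr hαβ
  refine ⟨2 * (1 + (β - α)⁻¹), by positivity, fun a b _ u u' hu => ?_⟩
  have hD : MeasurableSet (Ioo a b ∩ F1 α β) := measurableSet_Ioo.inter (measurableSet_F1 α β)
  set g := (Ioo a b ∩ F1 α β).indicator u'
  have hg2 : MemLp g 2 volume := (memLp_indicator_iff_restrict hD).mpr
    (hu.1.mono_measure (Measure.restrict_mono inter_subset_left le_rfl))
  have hg : Integrable g := (integrable_indicator_iff hD).mpr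
    (IntegrableOn.mono_set (hu.1.integrable one_le_two) inter_subset_left)
  set f := g - corrector α (β - α) g
  have hv : IsH1On a b (u - fun x => ∫ t in α..x, f t) (u' - f) :=
    hu.sub (isH1On_primitive (intervalIntegrable_sub_corrector hℓ.le hg)
      (memLp_sub_corrector hℓ.le hg hg2 measure_Ioo_lt_top.ne) α)
  have hv0 : ∀ᵐ x ∂volume, x ∈ Ioo a b ∩ F1 α β → (u' - f) x = 0 := .of_forall fun x hx => by
    simp [f, g, indicator_of_mem hx, corrector_eq_zero_of_mem_F1 hα hαβ hβ hx.2]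
  calc _ ≤ (∫ x in Ioo a b, ‖∫ t in α..x, f t‖ ^ 2) + ∫ x in Ioo a b, ‖f x‖ ^ 2 := by
        refine csInf_le ⟨0, ?_⟩ ⟨_, _, hv, hv0, by simp only [Pi.sub_apply, sub_sub_cancel]⟩
        rintro r ⟨v, v', -, -, rfl⟩
        positivity
    _ ≤ 4 * (1 + (β - α)⁻¹ ^ 2) * ∫ x, ‖g x‖ ^ 2 :=
        primitive_sub_corrector_estimate hℓ (by linarith) hg hg2 a b
    _ ≤ (2 * (1 + (β - α)⁻¹)) ^ 2 * ∫ x in Ioo a b ∩ F1 α β, ‖u' x‖ ^ 2 := by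
        rw [← integral_indicator hD]
        simp only [g, norm_indicator_eq_indicator_norm, sq, ← indicator_mul]
        refine mul_le_mul_of_nonneg_right ?_
          (integral_nonneg fun x => indicator_nonneg (fun x _ => by positivity) x)
        nlinarith [inv_pos.mpr hℓ]

end
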